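/- arXiv:2509.07344 — 5 statements merged into one kernel-verified Lean document; each statement's English description precedes it below -/
import Mathlib

section
/- Let p be a prime and let k, m be natural numbers with 1 ≤ m < p^k and p ∤ m. Then s_p(p^k − m) = (p − 1)·k + 1 − s_p(m), where s_p denotes the sum of base-p digits. -/
/-!
Kummer's theorem gives `(p - 1) · v_p (C(p^k, m)) = s_p(m) + s_p(p^k - m) - s_p(p^k)`.
Here `s_p(p^k) = 1`, and `v_p (C(p^k, m)) = k - v_p(m) = k` because `p ∤ m`.
-/

namespace Nat

theorem digits_sum_pos (b : ℕ) {n : ℕ} (hn : n ≠ 0) : 0 < (b.digits n).sum :=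
  (Nat.pos_of_ne_zero (getLast_digit_ne_zero b hn)).trans_le
    (List.le_sum_of_mem (List.getLast_mem _))

theorem digits_sum_base_pow {b : ℕ} (hb : 1 < b) (k : ℕ) : (b.digits (b ^ k)).sum = 1 := by
  have h := digits_base_pow_mul (k := k) hb one_pos
  rw [mul_one] at h
  simp [h, digits_of_lt b 1 one_ne_zero hb]

theorem padicValNat_choose_prime_pow {p k m : ℕ} (hp : p.Prime) (hmk : m ≤ p ^ k) (hm : m ≠ 0) :
    padicValNat p ((p ^ k).choose m) = k - padicValNat p m := by
  rw [← factorization_def _ hp, ← factorization_def _ hp]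
  exact factorization_choose_prime_pow hp hmk hm

end Nat

/-- For a prime `p` and `1 ≤ m < p^k` with `p ∤ m`,
`s_p(p^k - m) = (p - 1) * k + 1 - s_p(m)`, where `s_p` is the sum of base-`p` digits. -/
theorem sum_digits_pow_sub (p : ℕ) (hp : p.Prime) (k m : ℕ)
    (hm : 1 ≤ m) (hmk : m < p ^ k) (hpm : ¬ p ∣ m) :
    (Nat.digits p (p ^ k - m)).sum = (p - 1) * k + 1 - (Nat.digits p m).sum := by
  have : Fact p.Prime := ⟨hp⟩
  have kummer := sub_one_mul_padicValNat_choose_eq_sub_sum_digits (p := p) hmk.le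
  rw [Nat.padicValNat_choose_prime_pow hp hmk.le (by omega), padicValNat.eq_zero_of_not_dvd hpm,
    Nat.sub_zero, Nat.digits_sum_base_pow hp.one_lt] at kummer
  have digits_sum_m_pos := Nat.digits_sum_pos p (n := m) (by omega)
  omega
end

section
/- Let R be a commutative ring, p a prime, and x, y ∈ R. Write ε = x − y. Suppose ε^(p^k) = 0 and p^j · ε = 0 (the j-th power of p, acting as an integer multiple, annihilates ε). Then for every natural number n with n ≥ j + k, x^(p^n) = y^(p^n). -/
/-!
Expand `x ^ p ^ n = ((x - y) + y) ^ p ^ n` binomially. A term `ε ^ i * y ^ (p ^ n - i) * C(p ^ n, i)`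
with `0 < i` vanishes: either `i ≥ p ^ k` and `ε ^ i = 0`, or `i < p ^ k`, so `v_p(i) < k` and
`v_p C(p ^ n, i) = n - v_p(i) ≥ j`, whence `p ^ j` kills `ε * C(p ^ n, i)`.
-/

theorem Nat.pow_sub_dvd_choose_prime_pow {p n k i : ℕ} (hp : p.Prime) (hi : i ≠ 0)
    (hik : i < p ^ k) : p ^ (n - k) ∣ (p ^ n).choose i := by
  rcases lt_or_ge (p ^ n) i with hni | hin
  · simp [Nat.choose_eq_zero_of_lt hni]
  have hchoose : (p ^ n).choose i ≠ 0 := (Nat.choose_pos hin).ne'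
  have hval : i.factorization p < k :=
    (Nat.pow_lt_pow_iff_right hp.one_lt).mp ((Nat.ordProj_le p hi).trans_lt hik)
  rw [hp.pow_dvd_iff_le_factorization hchoose, Nat.factorization_choose_prime_pow hp hin hi]
  omega

theorem add_pow_prime_pow_eq_of_pow_eq_zero_of_nsmul_eq_zero {R : Type*} [CommSemiring R]
    {p j k n : ℕ} (hp : p.Prime) {ε : R} (hnil : ε ^ p ^ k = 0) (htor : p ^ j • ε = 0)
    (hn : j + k ≤ n) (y : R) : (ε + y) ^ p ^ n = y ^ p ^ n := by
  rw [add_pow, Finset.sum_eq_single 0 _ (by simp)]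
  · simp
  intro i _ hi
  rcases le_or_gt (p ^ k) i with hki | hik
  · rw [pow_eq_zero_of_le hki hnil, zero_mul, zero_mul]
  obtain ⟨c, hc⟩ : p ^ j ∣ (p ^ n).choose i :=
    (Nat.pow_dvd_pow p (by omega)).trans (Nat.pow_sub_dvd_choose_prime_pow hp hi hik)
  obtain ⟨m, rfl⟩ := Nat.exists_eq_add_one_of_ne_zero hi
  have hkill : ε * ((p ^ n).choose (m + 1) : R) = 0 := by
    rw [mul_comm, ← nsmul_eq_mul, hc, mul_nsmul, htor, nsmul_zero]
  calc ε ^ (m + 1) * y ^ (p ^ n - (m + 1)) * ((p ^ n).choose (m + 1) : R)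
      = ε * ((p ^ n).choose (m + 1) : R) * (ε ^ m * y ^ (p ^ n - (m + 1))) := by ring
    _ = 0 := by rw [hkill, zero_mul]

/-- In a commutative ring, if `ε = x - y` satisfies `ε^(p^k) = 0` and `p^j • ε = 0`,
then `x^(p^n) = y^(p^n)` for every `n ≥ j + k`. -/
theorem pow_prime_pow_eq_of_nilpotent_sub {R : Type*} [CommRing R] (p : ℕ) (hp : p.Prime)
    (x y : R) (j k : ℕ) (hnil : (x - y) ^ (p ^ k) = 0) (htor : (p ^ j : ℕ) • (x - y) = 0)
    (n : ℕ) (hn : j + k ≤ n) :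
    x ^ (p ^ n) = y ^ (p ^ n) := by
  calc x ^ p ^ n = (x - y + y) ^ p ^ n := by rw [sub_add_cancel]
    _ = y ^ p ^ n := add_pow_prime_pow_eq_of_pow_eq_zero_of_nsmul_eq_zero hp hnil htor hn y
end

section
/- Let C be a monoidal category with unit object 𝟙, let α : 𝟙 ⟶ A be a central morphism, let M be an object of C, and let μ : A ⊗ M ⟶ M be a morphism such that ((λ_M)⁻¹ ≫ (α ▷ M)) ≫ μ = id_M. Then (λ_M)⁻¹ ≫ (α ▷ M) : M ⟶ A ⊗ M is an isomorphism with inverse μ; in particular μ ≫ ((λ_M)⁻¹ ≫ (α ▷ M)) = id_{A ⊗ M}. -/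
open CategoryTheory MonoidalCategory

/-- A morphism `α : 𝟙 ⟶ A` in a monoidal category is central if
`α ⊗ id_A` and `id_A ⊗ α` agree up to the unitor identifications. -/
def IsCentral {C : Type*} [Category C] [MonoidalCategory C] {A : C}
    (α : 𝟙_ C ⟶ A) : Prop :=
  (λ_ A).inv ≫ (α ▷ A) = (ρ_ A).inv ≫ (A ◁ α)

/- Write `u_X := (λ_X)⁻¹ ≫ (α ▷ X) : X ⟶ A ⊗ X`. These maps are natural in `X`, and centrality
of `α` says exactly that `u_{A ⊗ M} = A ◁ u_M`. Hence
`μ ≫ u_M = u_{A ⊗ M} ≫ (A ◁ μ) = A ◁ (u_M ≫ μ) = 𝟙`, so the left inverse `μ` of `u_M` is also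
a right inverse. -/

section

variable {C : Type*} [Category C] [MonoidalCategory C] {A : C}

theorem leftUnitor_inv_whiskerRight_naturality (α : 𝟙_ C ⟶ A) {X Y : C} (f : X ⟶ Y) :
    f ≫ (λ_ Y).inv ≫ α ▷ Y = (λ_ X).inv ≫ α ▷ X ≫ A ◁ f := by
  rw [leftUnitor_inv_naturality_assoc, whisker_exchange]

theorem IsCentral.leftUnitor_inv_whiskerRight_tensor {α : 𝟙_ C ⟶ A} (hα : IsCentral α)
    (M : C) : (λ_ (A ⊗ M)).inv ≫ α ▷ (A ⊗ M) = A ◁ ((λ_ M).inv ≫ α ▷ M) := by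
  calc (λ_ (A ⊗ M)).inv ≫ α ▷ (A ⊗ M)
      = ((λ_ A).inv ≫ α ▷ A) ▷ M ≫ (α_ A A M).hom := by
        rw [leftUnitor_tensor_inv, Category.assoc, ← associator_naturality_left,
          comp_whiskerRight_assoc]
    _ = ((ρ_ A).inv ≫ A ◁ α) ▷ M ≫ (α_ A A M).hom := by rw [hα]
    _ = A ◁ ((λ_ M).inv ≫ α ▷ M) := by
        rw [comp_whiskerRight_assoc, associator_naturality_middle,
          triangle_assoc_comp_right_inv_assoc, MonoidalCategory.whiskerLeft_comp]

end

/-- If `α : 𝟙 ⟶ A` is central and `μ : A ⊗ M ⟶ M` is unital, i.e.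
`((λ_M)⁻¹ ≫ (α ▷ M)) ≫ μ = id_M`, then `(λ_M)⁻¹ ≫ (α ▷ M)` is an isomorphism
with inverse `μ`; in particular `μ ≫ ((λ_M)⁻¹ ≫ (α ▷ M)) = id`. -/
theorem isIso_of_central_unital {C : Type*} [Category C] [MonoidalCategory C]
    {A M : C} (α : 𝟙_ C ⟶ A) (hα : IsCentral α) (μ : A ⊗ M ⟶ M)
    (hμ : ((λ_ M).inv ≫ (α ▷ M)) ≫ μ = 𝟙 M) :
    IsIso ((λ_ M).inv ≫ (α ▷ M)) ∧
      μ ≫ ((λ_ M).inv ≫ (α ▷ M)) = 𝟙 (A ⊗ M) := by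
  have hμ' : μ ≫ ((λ_ M).inv ≫ (α ▷ M)) = 𝟙 (A ⊗ M) :=
    calc μ ≫ ((λ_ M).inv ≫ (α ▷ M))
        = ((λ_ (A ⊗ M)).inv ≫ α ▷ (A ⊗ M)) ≫ A ◁ μ := by
          rw [leftUnitor_inv_whiskerRight_naturality, Category.assoc]
      _ = A ◁ (((λ_ M).inv ≫ α ▷ M) ≫ μ) := by
          rw [hα.leftUnitor_inv_whiskerRight_tensor, ← MonoidalCategory.whiskerLeft_comp]
      _ = 𝟙 (A ⊗ M) := by rw [hμ, MonoidalCategory.whiskerLeft_id]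
  exact ⟨⟨μ, hμ, hμ'⟩, hμ'⟩
end

section
/- Let C be a symmetric (or braided) monoidal category with unit object 𝟙 and let e : 𝟙 ⟶ A be a morphism. Then: (i) (λ_A)⁻¹ ≫ (e ▷ A) : A ⟶ A ⊗ A is an isomorphism if and only if (ρ_A)⁻¹ ≫ (A ◁ e) : A ⟶ A ⊗ A is an isomorphism; (ii) if these maps are isomorphisms, then (λ_A)⁻¹ ≫ (e ▷ A) = (ρ_A)⁻¹ ≫ (A ◁ e), i.e. e ⊗ id_A and id_A ⊗ e agree up to the unitor identifications. -/
open CategoryTheory MonoidalCategory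

/-!
Write `f = λ⁻¹ ≫ e ▷ A` and `g = ρ⁻¹ ≫ A ◁ e`. The braiding carries `f` to `g`, which gives (i).
For (ii) no braiding is needed: `f ≫ A ◁ u = u ≫ λ⁻¹ ≫ e ▷ X` for every `u : A ⟶ X`,
while `g ≫ A ◁ u` only depends on `e ≫ u`, and `e ≫ f = e ≫ g` since both are `e ⊗ e`.
Cancelling the epimorphisms `f` and `g` gives `A ◁ f = A ◁ g = λ⁻¹ ≫ e ▷ (A ⊗ A)`, and
cancelling the isomorphism `A ◁ f` from `f ≫ A ◁ f = g ≫ A ◁ f` then gives `f = g`.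
-/

namespace CategoryTheory.MonoidalCategory

variable {C : Type*} [Category C] [MonoidalCategory C] {A : C} (e : 𝟙_ C ⟶ A)

lemma leftUnitor_inv_whiskerRight_comp_whiskerLeft {X Y : C} (u : X ⟶ Y) :
    ((λ_ X).inv ≫ e ▷ X) ≫ A ◁ u = u ≫ (λ_ Y).inv ≫ e ▷ Y := by
  rw [Category.assoc, ← whisker_exchange, leftUnitor_inv_naturality_assoc]

lemma rightUnitor_inv_whiskerLeft_comp_whiskerLeft {X : C} (u : A ⟶ X) :
    ((ρ_ A).inv ≫ A ◁ e) ≫ A ◁ u = (ρ_ A).inv ≫ A ◁ (e ≫ u) := by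
  rw [Category.assoc, whiskerLeft_comp]

lemma comp_leftUnitor_inv_whiskerRight_eq_comp_rightUnitor_inv_whiskerLeft :
    e ≫ (λ_ A).inv ≫ e ▷ A = e ≫ (ρ_ A).inv ≫ A ◁ e := by
  rw [leftUnitor_inv_naturality_assoc, rightUnitor_inv_naturality_assoc, whisker_exchange,
    unitors_inv_equal]

lemma leftUnitor_inv_whiskerRight_eq_of_isIso [IsIso ((λ_ A).inv ≫ e ▷ A)]
    [IsIso ((ρ_ A).inv ≫ A ◁ e)] : (λ_ A).inv ≫ e ▷ A = (ρ_ A).inv ≫ A ◁ e := by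
  set f := (λ_ A).inv ≫ e ▷ A
  set g := (ρ_ A).inv ≫ A ◁ e
  have hf : A ◁ f = (λ_ (A ⊗ A)).inv ≫ e ▷ (A ⊗ A) :=
    (cancel_epi f).mp (leftUnitor_inv_whiskerRight_comp_whiskerLeft e f)
  have hfg : A ◁ f = A ◁ g := (cancel_epi g).mp <| by
    rw [rightUnitor_inv_whiskerLeft_comp_whiskerLeft, rightUnitor_inv_whiskerLeft_comp_whiskerLeft,
      comp_leftUnitor_inv_whiskerRight_eq_comp_rightUnitor_inv_whiskerLeft]
  refine (cancel_mono (A ◁ f)).mp ?_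
  calc f ≫ A ◁ f = f ≫ A ◁ g := by rw [hfg]
    _ = g ≫ A ◁ f := by rw [leftUnitor_inv_whiskerRight_comp_whiskerLeft, hf]

lemma leftUnitor_inv_whiskerRight_comp_braiding [BraidedCategory C] (X : C) :
    ((λ_ X).inv ≫ e ▷ X) ≫ (β_ A X).hom = (ρ_ X).inv ≫ X ◁ e := by
  rw [Category.assoc, BraidedCategory.braiding_naturality_left, leftUnitor_inv_braiding_assoc]

end CategoryTheory.MonoidalCategory

/-- In a braided (e.g. symmetric) monoidal category, for a morphism `e : 𝟙 ⟶ A`: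
(i) `(λ_A)⁻¹ ≫ (e ▷ A)` is an isomorphism iff `(ρ_A)⁻¹ ≫ (A ◁ e)` is; and
(ii) if these are isomorphisms then they are equal. -/
theorem idempotent_symm {C : Type*} [Category C] [MonoidalCategory C]
    [BraidedCategory C] {A : C} (e : 𝟙_ C ⟶ A) :
    (IsIso ((λ_ A).inv ≫ (e ▷ A)) ↔ IsIso ((ρ_ A).inv ≫ (A ◁ e))) ∧
      (IsIso ((λ_ A).inv ≫ (e ▷ A)) →
        (λ_ A).inv ≫ (e ▷ A) = (ρ_ A).inv ≫ (A ◁ e)) := by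
  have isIso_iff : IsIso ((λ_ A).inv ≫ e ▷ A) ↔ IsIso ((ρ_ A).inv ≫ A ◁ e) := by
    rw [← leftUnitor_inv_whiskerRight_comp_braiding e A]
    exact ⟨fun _ => inferInstance, fun _ => IsIso.of_isIso_comp_right _ (β_ A A).hom⟩
  refine ⟨isIso_iff, fun hf => ?_⟩
  have := isIso_iff.mp hf
  exact leftUnitor_inv_whiskerRight_eq_of_isIso e
end

section
/- Let C be a monoidal category with unit object 𝟙 and let A be a monoid object in C, with unit η : 𝟙 ⟶ A and multiplication μ : A ⊗ A ⟶ A. If the unit η is central, then η is idempotent: the map (λ_A)⁻¹ ≫ (η ▷ A) : A ⟶ A ⊗ A is an isomorphism with inverse the multiplication μ. -/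
open CategoryTheory MonoidalCategory

/-!
Write `e := (λ_A)⁻¹ ≫ (η ▷ A)`. The left unit law says `e ≫ μ = 𝟙`. For the other composite,
naturality of `λ` turns `μ ≫ e` into `e_{A ⊗ A} ≫ (A ◁ μ)`; centrality of `η` lets the inserted
unit slide past the first factor, `e_{A ⊗ A} = A ◁ e`, so `μ ≫ e = A ◁ (e ≫ μ) = 𝟙`.
-/

namespace IsCentral

variable {C : Type*} [Category C] [MonoidalCategory C]

theorem leftUnitor_inv_whiskerRight_tensor_s7 {A : C} {α : 𝟙_ C ⟶ A} (hα : IsCentral α) (X : C) :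
    (λ_ (A ⊗ X)).inv ≫ α ▷ (A ⊗ X) = A ◁ ((λ_ X).inv ≫ α ▷ X) :=
  calc (λ_ (A ⊗ X)).inv ≫ α ▷ (A ⊗ X)
      = ((λ_ A).inv ≫ α ▷ A) ▷ X ≫ (α_ A A X).hom := by simp
    _ = ((ρ_ A).inv ≫ A ◁ α) ▷ X ≫ (α_ A A X).hom := by rw [hα]
    _ = A ◁ ((λ_ X).inv ≫ α ▷ X) := by simp

theorem mul_comp_leftUnitor_inv_one_whiskerRight {M : C} [MonObj M]
    (hη : IsCentral (MonObj.one (X := M))) :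
    MonObj.mul ≫ (λ_ M).inv ≫ MonObj.one ▷ M = 𝟙 (M ⊗ M) :=
  calc MonObj.mul ≫ (λ_ M).inv ≫ MonObj.one ▷ M
      = (λ_ (M ⊗ M)).inv ≫ MonObj.one ▷ (M ⊗ M) ≫ M ◁ MonObj.mul := by
        rw [leftUnitor_inv_naturality_assoc, whisker_exchange]
    _ = M ◁ ((λ_ M).inv ≫ MonObj.one ▷ M ≫ MonObj.mul) := by
        rw [← Category.assoc, hη.leftUnitor_inv_whiskerRight_tensor_s7, ← whiskerLeft_comp,
          Category.assoc]
    _ = 𝟙 (M ⊗ M) := by simp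

end IsCentral

/-- If the unit of a monoid object `A` in a monoidal category is central, then it is
idempotent: `(λ_A)⁻¹ ≫ (η ▷ A)` is an isomorphism with inverse the multiplication. -/
theorem central_unit_of_monoid_is_idempotent {C : Type*} [Category C] [MonoidalCategory C]
    (A : Mon C) (h : IsCentral (MonObj.one (X := A.X))) :
    IsIso ((λ_ A.X).inv ≫ (MonObj.one (X := A.X) ▷ A.X)) ∧
      ((λ_ A.X).inv ≫ (MonObj.one (X := A.X) ▷ A.X)) ≫ MonObj.mul (X := A.X) = 𝟙 A.X ∧
      MonObj.mul (X := A.X) ≫ ((λ_ A.X).inv ≫ (MonObj.one (X := A.X) ▷ A.X)) = 𝟙 (A.X ⊗ A.X) := by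
  have hunit : ((λ_ A.X).inv ≫ MonObj.one ▷ A.X) ≫ MonObj.mul = 𝟙 A.X := by simp
  have hmul := h.mul_comp_leftUnitor_inv_one_whiskerRight
  exact ⟨⟨MonObj.mul, hunit, hmul⟩, hunit, hmul⟩
end
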